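/- arXiv:0810.3440 — 8 statements merged into one kernel-verified Lean document; each statement's English description precedes it below -/
import Mathlib

section
/- For 1 ≤ a ≤ b, the minimum distance of the code C₀(a,b) is a, i.e., every nonzero element of C₀(a,b) has Hamming weight at least a, and some element has weight exactly a. -/
/-- The elementary row matrix `r_i`: 1's exactly in row `i`. -/
def rowMat (a b : ℕ) (i : Fin a) : Matrix (Fin a) (Fin b) (ZMod 2) :=
  fun i' _ => if i' = i then 1 else 0

/-- The elementary column matrix `c_j`: 1's exactly in column `j`. -/
def colMat (a b : ℕ) (j : Fin b) : Matrix (Fin a) (Fin b) (ZMod 2) :=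
  fun _ j' => if j' = j then 1 else 0

/-- The code `C₀(a,b)`, spanned by the elementary row and column matrices. -/
def C0 (a b : ℕ) : Submodule (ZMod 2) (Matrix (Fin a) (Fin b) (ZMod 2)) :=
  Submodule.span (ZMod 2) (Set.range (rowMat a b) ∪ Set.range (colMat a b))

/-- The Hamming weight of a matrix: the number of nonzero entries. -/
def wt {a b : ℕ} (M : Matrix (Fin a) (Fin b) (ZMod 2)) : ℕ :=
  (Finset.univ.filter fun p : Fin a × Fin b => M p.1 p.2 ≠ 0).card

/-!
Every codeword of `C₀(a,b)` has the form `M i j = x i + y j`. If every row of a nonzero codeword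
has a nonzero entry, its weight is at least `a`. Otherwise some row `i₀` vanishes, and then
`M i j = (x i + y j) - (x i₀ + y j) = x i - x i₀` does not depend on `j`: a nonzero entry fills its
whole row, and the weight is at least `b ≥ a`. A single column matrix has weight exactly `a`.
-/

lemma exists_add_of_mem_C0 {a b : ℕ} {M : Matrix (Fin a) (Fin b) (ZMod 2)} (hM : M ∈ C0 a b) :
    ∃ (x : Fin a → ZMod 2) (y : Fin b → ZMod 2), ∀ i j, M i j = x i + y j := by
  induction hM using Submodule.span_induction with
  | mem v hv =>
    rcases hv with ⟨i, rfl⟩ | ⟨j, rfl⟩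
    · exact ⟨fun i' => if i' = i then 1 else 0, 0, fun i' j' => by simp [rowMat]⟩
    · exact ⟨0, fun j' => if j' = j then 1 else 0, fun i' j' => by simp [colMat]⟩
  | zero => exact ⟨0, 0, fun i j => by simp⟩
  | add u v _ _ hu hv =>
    obtain ⟨x, y, hxy⟩ := hu
    obtain ⟨x', y', hxy'⟩ := hv
    exact ⟨x + x', y + y', fun i j => by simp only [Matrix.add_apply, hxy, hxy', Pi.add_apply]; ring⟩
  | smul c v _ hv =>
    obtain ⟨x, y, hxy⟩ := hv
    exact ⟨c • x, c • y, fun i j => by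
      simp only [Matrix.smul_apply, hxy, Pi.smul_apply, smul_eq_mul]; ring⟩

lemma row_apply_eq_of_row_eq_zero {m n R : Type*} [CommRing R] {M : Matrix m n R}
    {x : m → R} {y : n → R} (hxy : ∀ i j, M i j = x i + y j) {i₀ : m} (h₀ : ∀ j, M i₀ j = 0)
    (i : m) (j j' : n) : M i j = M i j' := by
  have hy : ∀ j, y j = -x i₀ := fun j => eq_neg_of_add_eq_zero_right ((hxy i₀ j).symm.trans (h₀ j))
  rw [hxy, hxy, hy, hy]

lemma card_le_wt_of_forall_exists_ne_zero {a b : ℕ} {M : Matrix (Fin a) (Fin b) (ZMod 2)}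
    (h : ∀ i, ∃ j, M i j ≠ 0) : a ≤ wt M := by
  choose f hf using h
  simpa [wt] using Finset.card_le_card_of_injOn (fun i => (i, f i))
    (s := Finset.univ) (t := Finset.univ.filter fun p : Fin a × Fin b => M p.1 p.2 ≠ 0)
    (fun i _ => by simpa using hf i) (fun i _ i' _ h => (Prod.mk.inj h).1)

lemma card_le_wt_of_row_ne_zero {a b : ℕ} {M : Matrix (Fin a) (Fin b) (ZMod 2)} {i : Fin a}
    (h : ∀ j, M i j ≠ 0) : b ≤ wt M := by
  simpa [wt] using Finset.card_le_card_of_injOn (fun j => (i, j))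
    (s := Finset.univ) (t := Finset.univ.filter fun p : Fin a × Fin b => M p.1 p.2 ≠ 0)
    (fun j _ => by simpa using h j) (fun j _ j' _ h => (Prod.mk.inj h).2)

lemma le_wt_of_mem_C0 {a b : ℕ} (hab : a ≤ b) {M : Matrix (Fin a) (Fin b) (ZMod 2)}
    (hM : M ∈ C0 a b) (hM0 : M ≠ 0) : a ≤ wt M := by
  by_cases hrows : ∀ i, ∃ j, M i j ≠ 0
  · exact card_le_wt_of_forall_exists_ne_zero hrows
  push Not at hrows
  obtain ⟨i₀, h₀⟩ := hrows
  obtain ⟨x, y, hxy⟩ := exists_add_of_mem_C0 hM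
  obtain ⟨i, j, hij⟩ : ∃ i j, M i j ≠ 0 := by
    by_contra! h
    exact hM0 (Matrix.ext h)
  exact hab.trans <| card_le_wt_of_row_ne_zero fun j' =>
    row_apply_eq_of_row_eq_zero hxy h₀ i j' j ▸ hij

lemma wt_colMat {a b : ℕ} (j : Fin b) : wt (colMat a b j) = a := by
  have : (Finset.univ.filter fun p : Fin a × Fin b => colMat a b j p.1 p.2 ≠ 0) =
      Finset.univ ×ˢ {j} := by
    ext p
    simp [colMat, Prod.ext_iff, eq_comm]
  simp [wt, this]

theorem minDistance_C0 (a b : ℕ) (ha : 1 ≤ a) (hab : a ≤ b) :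
    (∀ v ∈ C0 a b, v ≠ 0 → a ≤ wt v) ∧ (∃ v ∈ C0 a b, v ≠ 0 ∧ wt v = a) := by
  refine ⟨fun v hv hv0 => le_wt_of_mem_C0 hab hv hv0, ?_⟩
  let j : Fin b := ⟨0, hab.trans_lt' ha⟩
  refine ⟨colMat a b j, Submodule.subset_span (Or.inr ⟨j, rfl⟩), fun h => ?_, wt_colMat j⟩
  have h0 : wt (colMat a b j) = 0 := by simp [h, wt]
  rw [wt_colMat] at h0
  omega
end

section
/- If 2 = a < b, then C₀(2,b) equals the set of 2×b matrices over F₂ in which all column sums (c_{1j} + c_{2j}) are equal. -/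
/-!
`C₀(a,b)` is the image of the linear map `(x, y) ↦ (x i + y j)ᵢⱼ`, since `r_i` and `c_j` are the
images of the standard basis vectors. With two rows, `(x i + y j)` has column sums `x 0 + x 1`
because `2 y j = 0`; conversely, a matrix with constant column sum `c` is `(x i + y j)` for
`x = (0, c)` and `y` its first row.
-/

def outerSum (a b : ℕ) :
    ((Fin a → ZMod 2) × (Fin b → ZMod 2)) →ₗ[ZMod 2] Matrix (Fin a) (Fin b) (ZMod 2) where
  toFun p := Matrix.of fun i j => p.1 i + p.2 j
  map_add' _ _ := Matrix.ext fun _ _ => add_add_add_comm _ _ _ _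
  map_smul' _ _ := Matrix.ext fun _ _ => (mul_add _ _ _).symm

section
variable {a b : ℕ}

@[simp]
theorem outerSum_apply (p : (Fin a → ZMod 2) × (Fin b → ZMod 2)) (i : Fin a) (j : Fin b) :
    outerSum a b p i j = p.1 i + p.2 j := rfl

theorem rowMat_eq_outerSum (i : Fin a) : rowMat a b i = outerSum a b (Pi.single i 1, 0) := by
  ext i' j
  by_cases h : i' = i <;> simp [rowMat, h]

theorem colMat_eq_outerSum (j : Fin b) : colMat a b j = outerSum a b (0, Pi.single j 1) := by
  ext i j'
  by_cases h : j' = j <;> simp [colMat, h]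

theorem outerSum_eq_sum (p : (Fin a → ZMod 2) × (Fin b → ZMod 2)) :
    outerSum a b p = ∑ i, p.1 i • rowMat a b i + ∑ j, p.2 j • colMat a b j := by
  ext i j
  simp [rowMat, colMat, Matrix.sum_apply]

end

theorem C0_eq_range_outerSum (a b : ℕ) : C0 a b = LinearMap.range (outerSum a b) := by
  refine le_antisymm (Submodule.span_le.mpr ?_) ?_
  · rintro _ (⟨i, rfl⟩ | ⟨j, rfl⟩)
    · exact ⟨_, (rowMat_eq_outerSum i).symm⟩
    · exact ⟨_, (colMat_eq_outerSum j).symm⟩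
  · rintro _ ⟨p, rfl⟩
    rw [outerSum_eq_sum]
    exact add_mem
      (sum_mem fun i _ => Submodule.smul_mem _ _ (Submodule.subset_span (.inl ⟨i, rfl⟩)))
      (sum_mem fun j _ => Submodule.smul_mem _ _ (Submodule.subset_span (.inr ⟨j, rfl⟩)))

theorem mem_range_outerSum_two_iff {b : ℕ} (M : Matrix (Fin 2) (Fin b) (ZMod 2)) :
    M ∈ LinearMap.range (outerSum 2 b) ↔ ∀ j k : Fin b, M 0 j + M 1 j = M 0 k + M 1 k := by
  constructor
  · rintro ⟨p, rfl⟩ j k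
    simp only [outerSum_apply]
    rw [add_add_add_comm, CharTwo.add_self_eq_zero, add_add_add_comm, CharTwo.add_self_eq_zero]
  · intro h
    obtain _ | ⟨⟨j₀⟩⟩ := isEmpty_or_nonempty (Fin b)
    · exact ⟨0, Matrix.ext fun _ j => isEmptyElim j⟩
    refine ⟨(![0, M 0 j₀ + M 1 j₀], M 0), Matrix.ext fun i j => ?_⟩
    fin_cases i
    · simp
    · simp [← h j j₀, add_right_comm _ (M 1 j), CharTwo.add_self_eq_zero]

theorem C0_two_lt_general (b : ℕ) :
    ∀ M : Matrix (Fin 2) (Fin b) (ZMod 2),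
      M ∈ C0 2 b ↔ ∀ j k : Fin b, M 0 j + M 1 j = M 0 k + M 1 k := by
  intro M
  rw [C0_eq_range_outerSum, mem_range_outerSum_two_iff]

theorem C0_two_lt (b : ℕ) (hb : 2 < b) :
    ∀ M : Matrix (Fin 2) (Fin b) (ZMod 2),
      M ∈ C0 2 b ↔ ∀ j k : Fin b, M 0 j + M 1 j = M 0 k + M 1 k :=
  C0_two_lt_general b
end

section
/- If 2 < a < b, then the set of codewords of C₀(a,b) of Hamming weight exactly b which are not sums of elementary column matrices is precisely the set {r_1, …, r_a} of elementary row matrices. -/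
/-!
A codeword of `C₀(a,b)` has the form `v i j = x i + y j`, and it is a sum of column
matrices exactly when `x` is constant. If `x` has `s` nonzero and `s'` zero entries and `y` has
`t` nonzero and `t'` zero entries, then `wt v = s t' + s' t`, so
`wt v - b = (s - 1) t' + (s' - 1) t` with both terms nonnegative once `x` is not constant.
Weight `b` thus forces `s = 1, t = 0` or `s' = 1, t' = 0` (the mixed cases give `a = 2` or
`b = 0`), and in both cases `v` is a single row.
-/

open Finset Matrix

section

variable {a b : ℕ}

lemma mem_C0_iff {v : Matrix (Fin a) (Fin b) (ZMod 2)} :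
    v ∈ C0 a b ↔
      ∃ (x : Fin a → ZMod 2) (y : Fin b → ZMod 2), v = of fun i j => x i + y j := by
  constructor
  · intro hv
    induction hv using Submodule.span_induction with
    | mem w hw =>
      rcases hw with ⟨i, rfl⟩ | ⟨j, rfl⟩
      · exact ⟨Pi.single i 1, 0, by ext; simp [rowMat, Pi.single_apply]⟩
      · exact ⟨0, Pi.single j 1, by ext; simp [colMat, Pi.single_apply]⟩
    | zero => exact ⟨0, 0, by ext; simp⟩
    | add u w _ _ hu hw =>
      obtain ⟨x, y, rfl⟩ := hu
      obtain ⟨x', y', rfl⟩ := hw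
      exact ⟨x + x', y + y', by ext; simp only [Matrix.add_apply, of_apply, Pi.add_apply]; ring⟩
    | smul c u _ hu =>
      obtain ⟨x, y, rfl⟩ := hu
      exact ⟨c • x, c • y, by ext; simp [mul_add]⟩
  · rintro ⟨x, y, rfl⟩
    have : (of fun i j => x i + y j) =
        ∑ i, x i • rowMat a b i + ∑ j, y j • colMat a b j := by
      ext i j; simp [rowMat, colMat, Matrix.sum_apply]
    rw [this]
    exact add_mem
      (sum_mem fun i _ => Submodule.smul_mem _ _ (Submodule.subset_span (.inl ⟨i, rfl⟩)))
      (sum_mem fun j _ => Submodule.smul_mem _ _ (Submodule.subset_span (.inr ⟨j, rfl⟩)))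

lemma sum_colMat_apply (Y : Finset (Fin b)) (i : Fin a) (j : Fin b) :
    (∑ j' ∈ Y, colMat a b j') i j = if j ∈ Y then 1 else 0 := by
  simp [colMat, Matrix.sum_apply]

lemma exists_eq_sum_colMat_of_forall_eq {x : Fin a → ZMod 2} (y : Fin b → ZMod 2)
    {c : ZMod 2} (hx : ∀ i, x i = c) :
    ∃ Y : Finset (Fin b), (of fun i j => x i + y j) = ∑ j ∈ Y, colMat a b j := by
  refine ⟨({j | c + y j ≠ 0} : Finset _), ?_⟩
  ext i j
  simp only [of_apply, sum_colMat_apply, mem_filter, mem_univ, true_and, hx]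
  generalize c + y j = u
  revert u; decide

lemma wt_of_add (x : Fin a → ZMod 2) (y : Fin b → ZMod 2) :
    wt (of fun i j => x i + y j) =
      #{i | x i ≠ 0} * #{j | y j = 0} + #{i | x i = 0} * #{j | y j ≠ 0} := by
  have hZ2 : ∀ u w : ZMod 2, u + w ≠ 0 ↔ (u ≠ 0 ∧ w = 0 ∨ u = 0 ∧ w ≠ 0) := by
    decide
  rw [wt, ← card_product, ← card_product, ← card_union_of_disjoint]
  · congr 1; ext ⟨i, j⟩; simp [hZ2]
  · exact disjoint_left.2 fun p hp hq => by simp_all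

lemma eq_one_or_eq_zero_of_mul_add_mul_eq {s s' t t' : ℕ} (hs : 1 ≤ s) (hs' : 1 ≤ s')
    (h : s * t' + s' * t = t + t') : (s = 1 ∨ t' = 0) ∧ (s' = 1 ∨ t = 0) := by
  obtain ⟨k, rfl⟩ := Nat.exists_eq_add_of_le' hs
  obtain ⟨k', rfl⟩ := Nat.exists_eq_add_of_le' hs'
  have : k * t' + k' * t = 0 := by linarith
  simp only [Nat.add_eq_zero_iff, mul_eq_zero] at this
  omega

lemma of_add_mem_range_rowMat_of_card_eq_one (x : Fin a → ZMod 2) {y : Fin b → ZMod 2}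
    {c : ZMod 2} (hy : ∀ j, y j = c) (hx : #{i | x i + c ≠ 0} = 1) :
    (of fun i j => x i + y j) ∈ Set.range (rowMat a b) := by
  obtain ⟨i₀, h⟩ := card_eq_one.1 hx
  refine ⟨i₀, ?_⟩
  ext i j
  have hi : x i + c ≠ 0 ↔ i = i₀ := by simpa using congrArg (i ∈ ·) h
  simp only [rowMat, of_apply, hy, ← hi]
  generalize x i + c = u
  revert u; decide

lemma of_add_mem_range_rowMat_of_wt_eq (ha : 2 < a) (hb : 0 < b)
    (x : Fin a → ZMod 2) (y : Fin b → ZMod 2) (hw : wt (of fun i j => x i + y j) = b)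
    (hcol : ∀ Y : Finset (Fin b), (of fun i j => x i + y j) ≠ ∑ j ∈ Y, colMat a b j) :
    (of fun i j => x i + y j) ∈ Set.range (rowMat a b) := by
  have hs : 1 ≤ #{i | x i ≠ 0} := by
    by_contra! h
    have hx : ∀ i, x i = 0 := by simpa [filter_eq_empty_iff] using h
    exact (exists_eq_sum_colMat_of_forall_eq y hx).elim hcol
  have hs' : 1 ≤ #{i | x i = 0} := by
    by_contra! h
    have hx : ∀ i, x i ≠ 0 := by simpa [filter_eq_empty_iff] using h
    exact (exists_eq_sum_colMat_of_forall_eq y fun i => Fin.eq_one_of_ne_zero _ (hx i)).elim hcol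
  have hcard_x := card_filter_add_card_filter_not (s := univ) fun i => x i ≠ 0
  have hcard_y := card_filter_add_card_filter_not (s := univ) fun j => y j ≠ 0
  simp only [not_not, card_univ, Fintype.card_fin] at hcard_x hcard_y
  rw [wt_of_add] at hw
  obtain ⟨hx_one | hy_nonzero, hx'_one | hy_zero⟩ :=
    eq_one_or_eq_zero_of_mul_add_mul_eq (t := #{j | y j ≠ 0}) (t' := #{j | y j = 0}) hs hs'
      (by omega)
  · omega
  · refine of_add_mem_range_rowMat_of_card_eq_one x (c := 0) ?_ (by simpa using hx_one)
    simpa [filter_eq_empty_iff] using hy_zero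
  · refine of_add_mem_range_rowMat_of_card_eq_one x (c := 1) ?_ ?_
    · have hy : ∀ j, y j ≠ 0 := by simpa [filter_eq_empty_iff] using hy_nonzero
      exact fun j => Fin.eq_one_of_ne_zero _ (hy j)
    · have : ∀ u : ZMod 2, u + 1 ≠ 0 ↔ u = 0 := by decide
      simpa only [this] using hx'_one
  · omega

lemma wt_rowMat (i : Fin a) : wt (rowMat a b i) = b := by
  have : ({p | rowMat a b i p.1 p.2 ≠ 0} : Finset (Fin a × Fin b)) = {i} ×ˢ univ := by
    ext ⟨i', j⟩; simp [rowMat, eq_comm]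
  rw [wt, this, card_product, card_singleton, card_univ, Fintype.card_fin, one_mul]

lemma rowMat_ne_sum_colMat (ha : 1 < a) (hb : 0 < b) (i : Fin a)
    (Y : Finset (Fin b)) : rowMat a b i ≠ ∑ j ∈ Y, colMat a b j := by
  have : Nontrivial (Fin a) := Fin.nontrivial_iff_two_le.2 ha
  obtain ⟨i', hi'⟩ := exists_ne i
  intro h
  have h₁ := congrFun₂ h i ⟨0, hb⟩
  have h₂ := congrFun₂ h i' ⟨0, hb⟩
  simp only [rowMat, sum_colMat_apply, if_neg hi'] at h₁ h₂
  exact one_ne_zero (h₁.trans h₂.symm)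

end

theorem rowMatrices_characterisation (a b : ℕ) (ha : 2 < a) (hab : a < b) :
    ∀ v : Matrix (Fin a) (Fin b) (ZMod 2),
      (v ∈ C0 a b ∧ wt v = b ∧ ∀ Y : Finset (Fin b), v ≠ ∑ j ∈ Y, colMat a b j) ↔
        v ∈ Set.range (rowMat a b) := by
  intro v
  constructor
  · rintro ⟨hv, hw, hcol⟩
    obtain ⟨x, y, rfl⟩ := mem_C0_iff.1 hv
    exact of_add_mem_range_rowMat_of_wt_eq ha (by omega) x y hw hcol
  · rintro ⟨i, rfl⟩
    exact ⟨Submodule.subset_span (.inl ⟨i, rfl⟩), wt_rowMat i,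
      rowMat_ne_sum_colMat (by omega) (by omega) i⟩
end

section
/- If 2 = a < b, then the automorphism group of C₀(2,b) is the wreath product C₂ ≀ Sym(b) acting on {1,2}×{1,…,b}, where Sym(b) permutes column indices and the base group C₂^b swaps row indices independently in each column. -/
/-!
Over `𝔽₂` a `2 × b` matrix lies in `C₀(2,b)` exactly when all its column sums agree. Swapping the
two entries of a column and permuting columns keep the column sums agreeing. Conversely, pull back
a column matrix `c_k` along an automorphism: the pulled-back matrix has column sum `0` on every
column meeting none of the two cells sent into column `k` (one exists since `b > 2`), hence on all
columns, so the cells of each column are sent into a common column. A permutation of `Fin 2 × Fin b`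
mapping columns into columns is an element of the wreath product.
-/

open Finset

def constColSum (a b : ℕ) : Submodule (ZMod 2) (Matrix (Fin a) (Fin b) (ZMod 2)) where
  carrier := {M | ∀ j j', ∑ i, M i j = ∑ i, M i j'}
  add_mem' {M N} hM hN j j' := by
    simp only [Matrix.add_apply, sum_add_distrib, hM j j', hN j j']
  zero_mem' _ _ := rfl
  smul_mem' c M hM j j' := by
    simp only [Matrix.smul_apply, smul_eq_mul, ← mul_sum, hM j j']

theorem C0_two_eq_constColSum (b : ℕ) : C0 2 b = constColSum 2 b := by
  refine le_antisymm (Submodule.span_le.mpr ?_) fun M hM => ?_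
  · rintro _ (⟨i, rfl⟩ | ⟨k, rfl⟩) j j'
    · simp [rowMat]
    · simp [colMat, CharTwo.two_eq_zero]
  rcases isEmpty_or_nonempty (Fin b) with hb | ⟨⟨j₀⟩⟩
  · simp [Subsingleton.elim M 0]
  -- Row `0` is a sum of column matrices; what is left of row `1` is the common column sum.
  have hM_eq : M = (∑ i, M i j₀) • rowMat 2 b 1 + ∑ j, M 0 j • colMat 2 b j := by
    ext i j
    have hcol : ∑ i, M i j = ∑ i, M i j₀ := hM j j₀
    simp only [Fin.sum_univ_two] at hcol
    rcases Fin.exists_fin_two.mp ⟨i, rfl⟩ with rfl | rfl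
    · simp [rowMat, colMat, Matrix.sum_apply]
    · simp [rowMat, colMat, Matrix.sum_apply, ← hcol]
      rw [add_right_comm, CharTwo.add_self_eq_zero, zero_add]
  rw [hM_eq]
  exact add_mem (Submodule.smul_mem _ _ (Submodule.subset_span (Or.inl ⟨1, rfl⟩)))
    (sum_mem fun j _ => Submodule.smul_mem _ _ (Submodule.subset_span (Or.inr ⟨j, rfl⟩)))

theorem comp_wreath_mem_constColSum {a b : ℕ} (σ : Equiv.Perm (Fin b))
    (τ : Fin b → Equiv.Perm (Fin a)) {M : Matrix (Fin a) (Fin b) (ZMod 2)}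
    (hM : M ∈ constColSum a b) : (fun i j => M (τ j i) (σ j)) ∈ constColSum a b := by
  intro j j'
  rw [Equiv.sum_comp (τ j) (M · (σ j)), Equiv.sum_comp (τ j') (M · (σ j'))]
  exact hM (σ j) (σ j')

theorem Equiv.Perm.exists_forall_snd_apply_ne {α β : Type*} [Fintype α] [Fintype β]
    (h : Fintype.card α < Fintype.card β) (φ : Equiv.Perm (α × β)) (k : β) :
    ∃ j, ∀ i, (φ (i, j)).2 ≠ k := by
  classical
  obtain ⟨j, -, hj⟩ := exists_mem_notMem_of_card_lt_card
    (s := univ.image fun i => (φ.symm (i, k)).2) (t := univ)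
    (card_image_le.trans_lt (by rwa [card_univ, card_univ]))
  refine ⟨j, fun i hik => hj (mem_image.mpr ⟨(φ (i, j)).1, mem_univ _, ?_⟩)⟩
  rw [← hik, Prod.mk.eta, Equiv.symm_apply_apply]

theorem snd_apply_one_eq_snd_apply_zero {b : ℕ} (hb : 2 < b) (φ : Equiv.Perm (Fin 2 × Fin b))
    (hφ : ∀ M ∈ constColSum 2 b, (fun i j => M (φ (i, j)).1 (φ (i, j)).2) ∈ constColSum 2 b)
    (j : Fin b) : (φ (1, j)).2 = (φ (0, j)).2 := by
  generalize hk : (φ (0, j)).2 = k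
  obtain ⟨j', hj'⟩ := φ.exists_forall_snd_apply_ne (by simpa using hb) k
  have hcolMat : colMat 2 b k ∈ constColSum 2 b := by
    rw [← C0_two_eq_constColSum]
    exact Submodule.subset_span (Or.inr ⟨k, rfl⟩)
  have hsum := hφ _ hcolMat j j'
  simp only [colMat, Fin.sum_univ_two, if_neg (hj' 0), if_neg (hj' 1), if_pos hk] at hsum
  by_contra hne
  simp [if_neg hne] at hsum

theorem Equiv.Perm.exists_eq_wreath_of_snd_eq {α β : Type*} [Finite α] [Nonempty α]
    (φ : Equiv.Perm (α × β)) (hφ : ∀ i i' j, (φ (i, j)).2 = (φ (i', j)).2) :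
    ∃ (σ : Equiv.Perm β) (τ : β → Equiv.Perm α), ∀ p, φ p = (τ p.2 p.1, σ p.2) := by
  obtain ⟨i₀⟩ := ‹Nonempty α›
  have hτ (j : β) : Function.Bijective fun i => (φ (i, j)).1 := by
    refine Finite.injective_iff_bijective.mp fun i i' h => ?_
    simpa using φ.injective (Prod.ext h (hφ i i' j))
  have hσ : Function.Bijective fun j => (φ (i₀, j)).2 := by
    refine ⟨fun j j' h => ?_, fun k => ?_⟩
    · obtain ⟨i, hi⟩ := (hτ j).2 (φ (i₀, j')).1
      have := φ.injective (Prod.ext hi (h.symm.trans (hφ i₀ i j)).symm)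
      exact congrArg Prod.snd this
    · refine ⟨(φ.symm (i₀, k)).2, show (φ (i₀, _)).2 = k from ?_⟩
      rw [hφ i₀ (φ.symm (i₀, k)).1, Prod.mk.eta, φ.apply_symm_apply]
  exact ⟨.ofBijective _ hσ, fun j => .ofBijective _ (hτ j),
    fun ⟨i, j⟩ => Prod.ext rfl (hφ i i₀ j)⟩

theorem aut_C0_wreath (b : ℕ) (hb : 2 < b) :
    ∀ φ : Equiv.Perm (Fin 2 × Fin b),
      (∀ M ∈ C0 2 b, (fun i j => M (φ (i, j)).1 (φ (i, j)).2) ∈ C0 2 b) ↔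
        ∃ (σ : Equiv.Perm (Fin b)) (τ : Fin b → Equiv.Perm (Fin 2)),
          ∀ p : Fin 2 × Fin b, φ p = (τ p.2 p.1, σ p.2) := by
  intro φ
  rw [C0_two_eq_constColSum]
  constructor
  · intro hφ
    have hcol := snd_apply_one_eq_snd_apply_zero hb φ hφ
    refine φ.exists_eq_wreath_of_snd_eq fun i i' j => ?_
    fin_cases i <;> fin_cases i' <;> simp [hcol]
  · rintro ⟨σ, τ, hστ⟩ M hM
    simpa only [hστ] using comp_wreath_mem_constColSum σ τ hM
end

section
/- If (σ,τ) ∈ Sym(a) × Sym(b) generates a subgroup acting regularly on {1,…,a}×{1,…,b} (with 2 < a < b), then σ is an a-cycle, τ is a b-cycle, and gcd(a,b) = 1. -/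
/-!
A permutation whose cyclic group is transitive on a finite set of at least two points is a
full cycle, so its order is the size of the set. Transitivity of `(σ, τ)` on `Fin a × Fin b`
projects to transitivity of `σ` and of `τ`, hence `orderOf σ = a`, `orderOf τ = b` and
`orderOf (σ, τ) = a * b`. Since `(σ, τ) ^ lcm a b = 1`, we get `a * b ∣ lcm a b`, which forces
`gcd a b = 1`.
-/

namespace Equiv.Perm

variable {α β : Type*}

def prodCongrHom (α β : Type*) : Perm α × Perm β →* Perm (α × β) where
  toFun p := prodCongr p.1 p.2
  map_one' := rfl
  map_mul' _ _ := rfl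

theorem prodCongr_zpow (σ : Perm α) (τ : Perm β) (k : ℤ) :
    prodCongr σ τ ^ k = prodCongr (σ ^ k) (τ ^ k) :=
  (map_zpow (prodCongrHom α β) (σ, τ) k).symm

theorem orderOf_prodCongr_dvd_lcm (σ : Perm α) (τ : Perm β) :
    orderOf (prodCongr σ τ) ∣ (orderOf σ).lcm (orderOf τ) :=
  Prod.orderOf_mk (a := σ) (b := τ) ▸ orderOf_map_dvd (prodCongrHom α β) (σ, τ)

theorem SameCycle.prodCongr_fst {σ : Perm α} {τ : Perm β} {p q : α × β}
    (h : SameCycle (prodCongr σ τ) p q) : σ.SameCycle p.1 q.1 := by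
  obtain ⟨k, hk⟩ := h
  exact ⟨k, by rw [prodCongr_zpow] at hk; exact congrArg Prod.fst hk⟩

theorem SameCycle.prodCongr_snd {σ : Perm α} {τ : Perm β} {p q : α × β}
    (h : SameCycle (prodCongr σ τ) p q) : τ.SameCycle p.2 q.2 := by
  obtain ⟨k, hk⟩ := h
  exact ⟨k, by rw [prodCongr_zpow] at hk; exact congrArg Prod.snd hk⟩

section Transitive

variable [Nontrivial α] {f : Perm α} (h : ∀ x y, f.SameCycle x y)
include h

theorem apply_ne_self_of_forall_sameCycle (x : α) : f x ≠ x := by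
  intro hx
  obtain ⟨y, hy⟩ := exists_ne x
  exact hy ((h x y).eq_of_left hx).symm

theorem isCycle_of_forall_sameCycle : f.IsCycle :=
  let x := Classical.arbitrary α
  ⟨x, apply_ne_self_of_forall_sameCycle h x, fun y _ => h x y⟩

theorem support_eq_univ_of_forall_sameCycle [Fintype α] [DecidableEq α] :
    f.support = Finset.univ :=
  Finset.eq_univ_of_forall fun x => mem_support.2 (apply_ne_self_of_forall_sameCycle h x)

theorem orderOf_eq_card_of_forall_sameCycle [Fintype α] [DecidableEq α] :
    orderOf f = Fintype.card α := by
  rw [(isCycle_of_forall_sameCycle h).orderOf, support_eq_univ_of_forall_sameCycle h,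
    Finset.card_univ]

end Transitive

end Equiv.Perm

theorem Nat.coprime_of_mul_dvd_lcm {m n : ℕ} (hm : 0 < m) (hn : 0 < n) (h : m * n ∣ m.lcm n) :
    m.Coprime n := by
  have hlcm : m.lcm n = m * n := Nat.dvd_antisymm (Nat.lcm_dvd_mul m n) h
  simpa [hm.ne', hn.ne'] using Nat.lcm_eq_mul_iff.1 hlcm

theorem regular_cyclic_necessary_general (a b : ℕ) (ha : 2 < a) (hab : a < b)
    (σ : Equiv.Perm (Fin a)) (τ : Equiv.Perm (Fin b))
    (htrans : ∀ p q : Fin a × Fin b, ∃ k : ℤ, ((Equiv.prodCongr σ τ) ^ k) p = q) :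
    (σ.IsCycle ∧ σ.support = Finset.univ) ∧
    (τ.IsCycle ∧ τ.support = Finset.univ) ∧ Nat.gcd a b = 1 := by
  open Equiv.Perm in
  have : Nontrivial (Fin a) := Fin.nontrivial_iff_two_le.2 (by omega)
  have : Nontrivial (Fin b) := Fin.nontrivial_iff_two_le.2 (by omega)
  have hπ : ∀ p q, SameCycle (Equiv.prodCongr σ τ) p q := htrans
  obtain ⟨x₀, y₀⟩ : Fin a × Fin b := Classical.arbitrary _
  have hσ : ∀ x y, σ.SameCycle x y := fun x y => (hπ (x, y₀) (y, y₀)).prodCongr_fst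
  have hτ : ∀ x y, τ.SameCycle x y := fun x y => (hπ (x₀, x) (x₀, y)).prodCongr_snd
  refine ⟨⟨isCycle_of_forall_sameCycle hσ, support_eq_univ_of_forall_sameCycle hσ⟩,
    ⟨isCycle_of_forall_sameCycle hτ, support_eq_univ_of_forall_sameCycle hτ⟩,
    Nat.coprime_of_mul_dvd_lcm (by omega) (by omega) ?_⟩
  have hdvd := orderOf_prodCongr_dvd_lcm σ τ
  rwa [orderOf_eq_card_of_forall_sameCycle hπ, orderOf_eq_card_of_forall_sameCycle hσ,
    orderOf_eq_card_of_forall_sameCycle hτ, Fintype.card_prod, Fintype.card_fin,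
    Fintype.card_fin] at hdvd

theorem regular_cyclic_necessary (a b : ℕ) (ha : 2 < a) (hab : a < b)
    (σ : Equiv.Perm (Fin a)) (τ : Equiv.Perm (Fin b))
    (htrans : ∀ p q : Fin a × Fin b, ∃ k : ℤ, ((Equiv.prodCongr σ τ) ^ k) p = q)
    (hfree : ∀ k : ℤ, ∀ p : Fin a × Fin b,
      ((Equiv.prodCongr σ τ) ^ k) p = p → (Equiv.prodCongr σ τ) ^ k = 1) :
    (σ.IsCycle ∧ σ.support = Finset.univ) ∧
    (τ.IsCycle ∧ τ.support = Finset.univ) ∧ Nat.gcd a b = 1 :=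
  regular_cyclic_necessary_general a b ha hab σ τ htrans
end

section
/- For 2 < a = b, the imprimitive wreath product Sym(a) ≀ C₂ acting on {1,…,a}×{1,…,a} (with Sym(a)×Sym(a) acting coordinatewise and C₂ swapping the two coordinates) contains no cyclic subgroup acting regularly on the a² points. -/
/-!
If `g` generates a regular cyclic group on `Fin a × Fin a`, the `g`-orbit of every point has
length `a²`. A coordinatewise `g = (σ, τ)` returns to `(x, y)` after `lcm` of the `σ`-period of
`x` and the `τ`-period of `y`, which is less than `a²` as both are at most `a` and `a > 1`.
A swapping `g` has `g² = (τσ, στ)`, and since `στ = σ (τσ) σ⁻¹`, the point `(x, σ x)` returns after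
`2m`, where `m ≤ a` is the `τσ`-period of `x`; and `2a < a²` as `a > 2`.
-/

open Equiv MulAction

theorem Nat.lcm_lt_mul_self {m n a : ℕ} (hm : 0 < m) (hn : 0 < n) (hma : m ≤ a) (hna : n ≤ a)
    (ha : 1 < a) : m.lcm n < a * a := by
  rcases eq_or_ne m n with rfl | hmn
  · rw [Nat.lcm_self]
    nlinarith
  · calc m.lcm n ≤ m * n := Nat.le_of_dvd (by positivity) (Nat.lcm_dvd_mul m n)
      _ < a * a := by
        rcases lt_or_gt_of_ne hmn with h | h
        · exact Nat.mul_lt_mul_of_lt_of_le (by omega) hna (by omega)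
        · exact Nat.mul_lt_mul_of_le_of_lt hma (by omega) (by omega)

namespace Equiv.Perm

variable {α β : Type*}

theorem prodCongr_pow (σ : Perm α) (τ : Perm β) (n : ℕ) :
    (σ.prodCongr τ : Perm (α × β)) ^ n = (σ ^ n).prodCongr (τ ^ n) := by
  induction n with
  | zero => rfl
  | succ n ih => ext p <;> simp [pow_succ, ih]

theorem period_prodCongr_dvd_lcm (σ : Perm α) (τ : Perm β) (x : α) (y : β) :
    period (σ.prodCongr τ : Perm (α × β)) (x, y) ∣ (period σ x).lcm (period τ y) := by
  rw [← pow_smul_eq_iff_period_dvd, Perm.smul_def, prodCongr_pow, prodCongr_apply, Prod.map_apply]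
  rw [← Perm.smul_def, ← Perm.smul_def, pow_smul_eq_iff_period_dvd.mpr (Nat.dvd_lcm_left _ _),
    pow_smul_eq_iff_period_dvd.mpr (Nat.dvd_lcm_right _ _)]

theorem period_le_card [Fintype α] (σ : Perm α) (x : α) : period σ x ≤ Fintype.card α :=
  Function.minimalPeriod_le_card

theorem period_pos [Finite α] (σ : Perm α) (x : α) : 0 < period σ x :=
  period_pos_of_orderOf_pos (orderOf_pos σ) x

theorem period_prodCongr_lt_card_mul_card [Fintype α] (hα : 1 < Fintype.card α)
    (σ τ : Perm α) (x y : α) :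
    period (σ.prodCongr τ : Perm (α × α)) (x, y) < Fintype.card α * Fintype.card α :=
  (Nat.le_of_dvd (Nat.lcm_pos (period_pos σ x) (period_pos τ y))
    (period_prodCongr_dvd_lcm σ τ x y)).trans_lt <|
    Nat.lcm_lt_mul_self (period_pos σ x) (period_pos τ y) (period_le_card σ x)
      (period_le_card τ y) hα

theorem sq_eq_prodCongr_of_forall_apply_eq_swap {g : Perm (α × α)} {σ τ : Perm α}
    (hg : ∀ p, g p = (τ p.2, σ p.1)) : g ^ 2 = (τ * σ).prodCongr (σ * τ) := by
  ext p <;> simp [sq, hg]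

theorem period_le_two_mul_of_forall_apply_eq_swap [Finite α] {g : Perm (α × α)} {σ τ : Perm α}
    (hg : ∀ p, g p = (τ p.2, σ p.1)) (x : α) :
    period g (x, σ x) ≤ 2 * period (τ * σ) x := by
  refine period_le_of_fixed (by simpa using period_pos (τ * σ) x) ?_
  have hconj : σ * τ = σ * (τ * σ) * σ⁻¹ := by group
  rw [pow_mul, sq_eq_prodCongr_of_forall_apply_eq_swap hg, prodCongr_pow, hconj, conj_pow]
  simp only [Perm.smul_def, prodCongr_apply, coe_mul, coe_inv, Prod.map_apply,
    Function.comp_apply, symm_apply_apply, Prod.mk.injEq, EmbeddingLike.apply_eq_iff_eq, and_self]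
  exact pow_period_smul (τ * σ) x

theorem card_le_orderOf_of_forall_sameCycle [Fintype α] {g : Perm α}
    (hg : ∀ p q, g.SameCycle p q) : Fintype.card α ≤ orderOf g := by
  cases isEmpty_or_nonempty α with
  | inl _ => simp
  | inr h =>
    obtain ⟨p⟩ := h
    simpa using Fintype.card_le_of_surjective (fun i : Fin (orderOf g) => (g ^ (i : ℕ)) p)
      fun q => by
        obtain ⟨i, hi, hq⟩ := (hg p q).exists_pow_eq'
        exact ⟨⟨i, hi⟩, hq⟩

theorem card_le_period_of_regular [Fintype α] {g : Perm α} (htrans : ∀ p q, g.SameCycle p q)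
    (hfree : ∀ k : ℤ, ∀ p, (g ^ k) p = p → g ^ k = 1) (p : α) :
    Fintype.card α ≤ period g p := by
  have hone : g ^ period g p = 1 := by
    exact_mod_cast hfree (period g p) p (by exact_mod_cast pow_period_smul g p)
  exact (card_le_orderOf_of_forall_sameCycle htrans).trans
    (orderOf_le_of_pow_eq_one (period_pos g p) hone)

end Equiv.Perm

theorem wreath_no_regular_cyclic (a : ℕ) (ha : 2 < a) :
    ¬ ∃ g : Equiv.Perm (Fin a × Fin a),
      (∃ σ τ : Equiv.Perm (Fin a),
        (∀ p : Fin a × Fin a, g p = (σ p.1, τ p.2)) ∨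
        (∀ p : Fin a × Fin a, g p = (τ p.2, σ p.1))) ∧
      (∀ p q : Fin a × Fin a, ∃ k : ℤ, (g ^ k) p = q) ∧
      (∀ k : ℤ, ∀ p : Fin a × Fin a, (g ^ k) p = p → g ^ k = 1) := by
  rintro ⟨g, ⟨σ, τ, hg | hg⟩, htrans, hfree⟩ <;> let x : Fin a := ⟨0, by omega⟩
  · obtain rfl : g = σ.prodCongr τ := Equiv.ext hg
    have hfull := Perm.card_le_period_of_regular htrans hfree (x, x)
    have hshort := Perm.period_prodCongr_lt_card_mul_card (by simp; omega) σ τ x x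
    simp only [Fintype.card_prod, Fintype.card_fin] at hfull hshort
    omega
  · have hfull := Perm.card_le_period_of_regular htrans hfree (x, σ x)
    have hshort := Perm.period_le_two_mul_of_forall_apply_eq_swap hg x
    have hm := Perm.period_le_card (τ * σ) x
    simp only [Fintype.card_prod, Fintype.card_fin] at hfull hm
    nlinarith
end

section
/- If a + b is odd, then the code C₁(a,b) := span⟨r_i + c_j : 1 ≤ i ≤ a, 1 ≤ j ≤ b⟩ equals C₀(a,b) := span⟨{r_i} ∪ {c_j}⟩. -/
/-- The code `C₁(a,b)`, spanned by the matrices `r_i + c_j`. -/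
def C1 (a b : ℕ) : Submodule (ZMod 2) (Matrix (Fin a) (Fin b) (ZMod 2)) :=
  Submodule.span (ZMod 2) {M | ∃ i j, M = rowMat a b i + colMat a b j}

/-!
Clearly `C₁ ≤ C₀`. Conversely, the sum of all generators of `C₁` is `(a + b) • J = J`, with `J`
the all-ones matrix, so `J ∈ C₁`. The generators with a fixed row index `i` sum to `b • r_i + J`,
hence `b • r_i ∈ C₁`, and likewise `a • c_j ∈ C₁`. As `a + b` is odd, one of `a, b` is odd, so all
rows (or all columns) lie in `C₁`, and then `c_j = (r_i + c_j) + r_i` (or symmetrically) puts the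
other family in `C₁` too.
-/

section

variable {a b : ℕ}

theorem rowMat_add_colMat_mem_C1 (i : Fin a) (j : Fin b) :
    rowMat a b i + colMat a b j ∈ C1 a b :=
  Submodule.subset_span ⟨i, j, rfl⟩

theorem C1_le_C0 : C1 a b ≤ C0 a b := by
  rw [C1, Submodule.span_le]
  rintro M ⟨i, j, rfl⟩
  exact add_mem (Submodule.subset_span (Or.inl ⟨i, rfl⟩))
    (Submodule.subset_span (Or.inr ⟨j, rfl⟩))

theorem C0_le_iff {p : Submodule (ZMod 2) (Matrix (Fin a) (Fin b) (ZMod 2))} :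
    C0 a b ≤ p ↔ (∀ i, rowMat a b i ∈ p) ∧ ∀ j, colMat a b j ∈ p := by
  rw [C0, Submodule.span_le, Set.union_subset_iff, Set.range_subset_iff, Set.range_subset_iff]
  rfl

theorem sum_rowMat : ∑ i, rowMat a b i = Matrix.of fun _ _ => 1 := by
  ext i' j'
  simp [Matrix.sum_apply, rowMat]

theorem sum_colMat : ∑ j, colMat a b j = Matrix.of fun _ _ => 1 := by
  ext i' j'
  simp [Matrix.sum_apply, colMat]

theorem sum_rowMat_add_colMat_left (i : Fin a) :
    ∑ j, (rowMat a b i + colMat a b j) = (b : ZMod 2) • rowMat a b i + Matrix.of fun _ _ => 1 := by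
  rw [Finset.sum_add_distrib, sum_colMat, Finset.sum_const, Finset.card_univ, Fintype.card_fin,
    Nat.cast_smul_eq_nsmul]

theorem sum_rowMat_add_colMat_right (j : Fin b) :
    ∑ i, (rowMat a b i + colMat a b j) = (a : ZMod 2) • colMat a b j + Matrix.of fun _ _ => 1 := by
  rw [Finset.sum_add_distrib, sum_rowMat, Finset.sum_const, Finset.card_univ, Fintype.card_fin,
    Nat.cast_smul_eq_nsmul, add_comm]

theorem allOnes_mem_C1 (hodd : Odd (a + b)) : (Matrix.of fun _ _ => 1) ∈ C1 a b := by
  have hsum : ∑ i, ∑ j, (rowMat a b i + colMat a b j) =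
      ((a + b : ℕ) : ZMod 2) • Matrix.of fun _ _ => 1 := by
    simp_rw [sum_rowMat_add_colMat_left, Finset.sum_add_distrib, ← Finset.smul_sum, sum_rowMat,
      Finset.sum_const, Finset.card_univ, Fintype.card_fin, ← Nat.cast_smul_eq_nsmul (ZMod 2),
      Nat.cast_add, add_smul, add_comm]
  rw [ZMod.natCast_eq_one_iff_odd.mpr hodd, one_smul] at hsum
  rw [← hsum]
  exact Submodule.sum_mem _ fun i _ => Submodule.sum_mem _ fun j _ => rowMat_add_colMat_mem_C1 i j

theorem rowMat_mem_C1 (hodd : Odd (a + b)) (hb : Odd b) (i : Fin a) : rowMat a b i ∈ C1 a b := by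
  have h := Submodule.sum_mem (C1 a b) fun j (_ : j ∈ Finset.univ) => rowMat_add_colMat_mem_C1 i j
  rwa [sum_rowMat_add_colMat_left, Submodule.add_mem_iff_left _ (allOnes_mem_C1 hodd),
    ZMod.natCast_eq_one_iff_odd.mpr hb, one_smul] at h

theorem colMat_mem_C1 (hodd : Odd (a + b)) (ha : Odd a) (j : Fin b) : colMat a b j ∈ C1 a b := by
  have h := Submodule.sum_mem (C1 a b) fun i (_ : i ∈ Finset.univ) => rowMat_add_colMat_mem_C1 i j
  rwa [sum_rowMat_add_colMat_right, Submodule.add_mem_iff_left _ (allOnes_mem_C1 hodd),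
    ZMod.natCast_eq_one_iff_odd.mpr ha, one_smul] at h

theorem colMat_mem_C1_of_forall_rowMat_mem (hrow : ∀ i, rowMat a b i ∈ C1 a b) (j : Fin b) :
    colMat a b j ∈ C1 a b := by
  rcases isEmpty_or_nonempty (Fin a) with _ | ⟨⟨i⟩⟩
  · rw [Subsingleton.elim (colMat a b j) 0]
    exact zero_mem _
  · exact (Submodule.add_mem_iff_right _ (hrow i)).mp (rowMat_add_colMat_mem_C1 i j)

theorem rowMat_mem_C1_of_forall_colMat_mem (hcol : ∀ j, colMat a b j ∈ C1 a b) (i : Fin a) :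
    rowMat a b i ∈ C1 a b := by
  rcases isEmpty_or_nonempty (Fin b) with _ | ⟨⟨j⟩⟩
  · rw [Subsingleton.elim (rowMat a b i) 0]
    exact zero_mem _
  · exact (Submodule.add_mem_iff_left _ (hcol j)).mp (rowMat_add_colMat_mem_C1 i j)

end

theorem C1_eq_C0_of_odd_general (a b : ℕ) (hodd : Odd (a + b)) :
    C1 a b = C0 a b := by
  refine le_antisymm C1_le_C0 (C0_le_iff.mpr ?_)
  rcases Nat.even_or_odd b with hb | hb
  · have hcol := colMat_mem_C1 hodd (Nat.odd_add.mp hodd |>.mpr hb)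
    exact ⟨rowMat_mem_C1_of_forall_colMat_mem hcol, hcol⟩
  · have hrow := rowMat_mem_C1 hodd hb
    exact ⟨hrow, colMat_mem_C1_of_forall_rowMat_mem hrow⟩

theorem C1_eq_C0_of_odd (a b : ℕ) (ha : 1 ≤ a) (hb : 1 ≤ b) (hodd : Odd (a + b)) :
    C1 a b = C0 a b :=
  C1_eq_C0_of_odd_general a b hodd
end

section
/- Let N ≥ 3 and let C ≤ F₂^N be a linear code invariant under the alternating group Alt(N) acting by coordinate permutations. Then C is one of the four elementary codes: {0}, F₂·(1,…,1), the even-weight code {v : wt(v) ≡ 0 mod 2}, or all of F₂^N. Consequently Aut(C) ≠ Alt(N) for any binary linear code C of length N ≥ 3. -/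
/-!
If a codeword `v` is not constant, pick distinct `i, j, k` with `v k = v i ≠ v j`; adding to `v`
its image under the 3-cycle `(i j k)` gives a weight-two word `eᵢ + eⱼ`. Such a word is fixed by
the odd transposition `(i j)`, so its orbit under `Alt(N)` is its full orbit under `Sym(N)`: all
`eₐ + e_b`, which span the even-weight code, a hyperplane. All four resulting codes are
`Sym(N)`-invariant, so `Aut(C)` always contains a transposition.
-/

/-- The Hamming weight of a vector in `F₂^N`. -/
def hwt {N : ℕ} (v : Fin N → ZMod 2) : ℕ :=
  (Finset.univ.filter fun i => v i ≠ 0).card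

open Equiv

lemma ZMod.two_add_eq_one_of_ne : ∀ {x y : ZMod 2}, x ≠ y → x + y = 1 := by decide

lemma ZMod.two_eq_of_ne_of_ne : ∀ {x y z : ZMod 2}, x ≠ y → z ≠ x → z = y := by decide

lemma Submodule.coe_eq_singleton_zero_or_pair_of_subset {R M : Type*} [Semiring R]
    [AddCommMonoid M] [Module R M] {C : Submodule R M} {x : M} (h : (C : Set M) ⊆ {0, x}) :
    (C : Set M) = {0} ∨ (C : Set M) = {0, x} := by
  by_cases hx : x ∈ C
  · exact Or.inr (h.antisymm (Set.insert_subset C.zero_mem (Set.singleton_subset_iff.2 hx)))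
  · refine Or.inl (Set.Subset.antisymm (fun v hv => ?_) (Set.singleton_subset_iff.2 C.zero_mem))
    exact (h hv).resolve_right fun hvx => hx (hvx ▸ hv)

namespace BinaryCode

variable {α : Type*} [DecidableEq α]

def pairVec (a b : α) : α → ZMod 2 := Pi.single a 1 + Pi.single b 1

lemma pairVec_comm (a b : α) : pairVec a b = pairVec b a := add_comm _ _

@[simp] lemma pairVec_self (a : α) : pairVec a a = 0 := ZModModule.add_self _

lemma pairVec_comp_perm (a b : α) (σ : Perm α) :
    (fun p => pairVec a b (σ p)) = pairVec (σ.symm a) (σ.symm b) := by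
  funext p
  simp only [pairVec, Pi.add_apply, Pi.single_apply, ← σ.eq_symm_apply]

lemma comp_swap_eq_add_smul_pairVec (v : α → ZMod 2) (a b : α) :
    (fun p => v (swap a b p)) = v + (v a + v b) • pairVec a b := by
  funext p
  simp only [swap_apply_def, pairVec, Pi.add_apply, Pi.smul_apply, Pi.single_apply, smul_eq_mul]
  split_ifs <;> subst_vars <;> grind

lemma add_comp_cycle {i j k : α} (hki : k ≠ i) (hkj : k ≠ j) (v : α → ZMod 2) :
    v + (fun p => v ((swap i j * swap j k) p)) =
      (v i + v j) • pairVec i j + (v i + v k) • pairVec j k := by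
  have hvk : v (swap i j k) = v k := by rw [swap_apply_of_ne_of_ne hki hkj]
  change v + (fun p => (fun q => v (swap i j q)) (swap j k p)) = _
  rw [comp_swap_eq_add_smul_pairVec (fun q => v (swap i j q)), swap_apply_right, hvk,
    comp_swap_eq_add_smul_pairVec, ← add_assoc, ← add_assoc, ZModModule.add_self, zero_add]

lemma exists_perm_apply_eq_apply_eq {i j a b : α} (hij : i ≠ j) (hab : a ≠ b) :
    ∃ σ : Perm α, σ i = a ∧ σ j = b := by
  have ha : a ≠ swap i a j := by
    simpa only [swap_apply_left] using (swap i a).injective.ne hij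
  exact ⟨swap (swap i a j) b * swap i a, by simp [swap_apply_of_ne_of_ne ha hab], by simp⟩

variable [Fintype α]

def IsAltInvariant (C : Submodule (ZMod 2) (α → ZMod 2)) : Prop :=
  ∀ σ ∈ alternatingGroup α, ∀ v ∈ C, (fun i => v (σ i)) ∈ C

variable {C : Submodule (ZMod 2) (α → ZMod 2)}

lemma swap_mul_swap_mem_alternatingGroup {i j k : α} (hij : i ≠ j) (hjk : j ≠ k) :
    swap i j * swap j k ∈ alternatingGroup α := by
  simp [Perm.mem_alternatingGroup, Perm.sign_swap hij, Perm.sign_swap hjk]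

lemma IsAltInvariant.pairVec_mem {v : α → ZMod 2} {i j k : α} (hC : IsAltInvariant C)
    (hv : v ∈ C) (hij : i ≠ j) (hki : k ≠ i) (hkj : k ≠ j) (hvij : v i ≠ v j)
    (hvki : v k = v i) : pairVec i j ∈ C := by
  have hmem := C.add_mem hv (hC _ (swap_mul_swap_mem_alternatingGroup hij hkj.symm) v hv)
  rwa [add_comp_cycle hki hkj, ZMod.two_add_eq_one_of_ne hvij, hvki, ZModModule.add_self,
    one_smul, zero_smul, add_zero] at hmem

lemma IsAltInvariant.exists_pairVec_mem (hα : 3 ≤ Fintype.card α) (hC : IsAltInvariant C)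
    {v : α → ZMod 2} (hv : v ∈ C) {i j : α} (hvij : v i ≠ v j) :
    ∃ a b, a ≠ b ∧ pairVec a b ∈ C := by
  have hij : i ≠ j := fun h => hvij (congrArg v h)
  obtain ⟨k, -, hk⟩ : ∃ k ∈ Finset.univ, k ∉ ({i, j} : Finset α) :=
    Finset.exists_mem_notMem_of_card_lt_card <| (Finset.card_le_two).trans_lt hα
  simp only [Finset.mem_insert, Finset.mem_singleton, not_or] at hk
  obtain ⟨hki, hkj⟩ := hk
  by_cases hvki : v k = v i
  · exact ⟨i, j, hij, hC.pairVec_mem hv hij hki hkj hvij hvki⟩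
  · have hvkj : v k = v j := ZMod.two_eq_of_ne_of_ne hvij hvki
    exact ⟨j, i, hij.symm, hC.pairVec_mem hv hij.symm hkj hki (Ne.symm hvij) hvkj⟩

lemma IsAltInvariant.comp_mem_of_comp_eq_self (hC : IsAltInvariant C) {v : α → ZMod 2}
    (hv : v ∈ C) {τ : Perm α} (hτ : Perm.sign τ = -1) (hvτ : (fun p => v (τ p)) = v)
    (σ : Perm α) : (fun p => v (σ p)) ∈ C := by
  by_cases hσ : σ ∈ alternatingGroup α
  · exact hC σ hσ v hv
  · have hτσ : τ * σ ∈ alternatingGroup α := by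
      rw [Perm.mem_alternatingGroup, Perm.sign_mul, hτ,
        (Int.units_eq_one_or _).resolve_left hσ]
      rfl
    convert hC _ hτσ v hv using 2 with p
    exact (congrFun hvτ (σ p)).symm

lemma IsAltInvariant.pairVec_mem_of_pairVec_mem (hC : IsAltInvariant C) {a b : α} (hab : a ≠ b)
    (h : pairVec a b ∈ C) (i j : α) : pairVec i j ∈ C := by
  rcases eq_or_ne i j with rfl | hij
  · simp
  obtain ⟨σ, hσi, hσj⟩ := exists_perm_apply_eq_apply_eq hij hab
  have hfix : (fun p => pairVec a b (swap a b p)) = pairVec a b := by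
    rw [pairVec_comp_perm, symm_swap, swap_apply_left, swap_apply_right, pairVec_comm]
  have hσ := hC.comp_mem_of_comp_eq_self h (Perm.sign_swap hab) hfix σ
  rwa [pairVec_comp_perm, σ.symm_apply_eq.2 hσi.symm, σ.symm_apply_eq.2 hσj.symm] at hσ

lemma sum_smul_pairVec (v : α → ZMod 2) (j : α) :
    ∑ i, v i • pairVec i j = v + (∑ i, v i) • Pi.single j 1 := by
  simp only [pairVec, smul_add, Finset.sum_add_distrib, ← Pi.single_smul, smul_eq_mul, mul_one,
    Finset.univ_sum_single, Finset.sum_smul]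

lemma mem_of_sum_eq_zero (hpair : ∀ i j : α, pairVec i j ∈ C) {v : α → ZMod 2}
    (hv : ∑ i, v i = 0) : v ∈ C := by
  rcases isEmpty_or_nonempty α with hα | ⟨⟨j⟩⟩
  · simp [Subsingleton.elim v 0]
  have hsum := sum_smul_pairVec v j
  rw [hv, zero_smul, add_zero] at hsum
  exact hsum ▸ C.sum_mem fun i _ => C.smul_mem _ (hpair i j)

lemma coe_eq_setOf_sum_eq_zero_or_univ (heven : ∀ v : α → ZMod 2, ∑ i, v i = 0 → v ∈ C) :
    (C : Set (α → ZMod 2)) = {v | ∑ i, v i = 0} ∨ (C : Set (α → ZMod 2)) = Set.univ := by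
  by_cases hodd : ∃ w ∈ C, ∑ i, w i ≠ 0
  · obtain ⟨w, hw, hw0⟩ := hodd
    refine Or.inr (Set.eq_univ_of_forall fun u => ?_)
    by_cases hu0 : ∑ i, u i = 0
    · exact heven u hu0
    have huw : ∑ i, (u + w) i = 0 := by
      rw [Pi.add_def, Finset.sum_add_distrib, ZMod.two_eq_of_ne_of_ne (Ne.symm hw0) hu0,
        ZModModule.add_self]
    simpa using C.sub_mem (heven _ huw) hw
  · push Not at hodd
    exact Or.inl (Set.ext fun v => ⟨hodd v, heven v⟩)

theorem IsAltInvariant.coe_eq (hα : 3 ≤ Fintype.card α) (hC : IsAltInvariant C) :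
    (C : Set (α → ZMod 2)) = {0} ∨ (C : Set (α → ZMod 2)) = {0, fun _ => 1} ∨
      (C : Set (α → ZMod 2)) = {v | ∑ i, v i = 0} ∨ (C : Set (α → ZMod 2)) = Set.univ := by
  by_cases hsub : (C : Set (α → ZMod 2)) ⊆ {0, fun _ => 1}
  · exact (C.coe_eq_singleton_zero_or_pair_of_subset hsub).imp_right Or.inl
  obtain ⟨v, hv, hv01⟩ := Set.not_subset.1 hsub
  simp only [Set.mem_insert_iff, Set.mem_singleton_iff, not_or, funext_iff, not_forall] at hv01
  obtain ⟨⟨i, hi⟩, ⟨j, hj⟩⟩ := hv01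
  have hvij : v i ≠ v j := by
    rw [ZMod.two_eq_of_ne_of_ne zero_ne_one hi]
    exact Ne.symm hj
  obtain ⟨a, b, hab, hpair⟩ := hC.exists_pairVec_mem hα hv hvij
  have hpairs := hC.pairVec_mem_of_pairVec_mem hab hpair
  exact Or.inr (Or.inr (coe_eq_setOf_sum_eq_zero_or_univ fun _ => mem_of_sum_eq_zero hpairs))

theorem IsAltInvariant.comp_mem_iff (hα : 3 ≤ Fintype.card α) (hC : IsAltInvariant C)
    (σ : Perm α) (v : α → ZMod 2) : (fun p => v (σ p)) ∈ C ↔ v ∈ C := by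
  have hconst (c : ZMod 2) : (∀ p, v (σ p) = c) ↔ ∀ p, v p = c :=
    σ.forall_congr_right (q := fun p => v p = c)
  rcases hC.coe_eq hα with h | h | h | h <;>
    simp only [← SetLike.mem_coe, h, Set.mem_insert_iff, Set.mem_singleton_iff, Set.mem_ofPred_eq,
      Set.mem_univ, funext_iff, Pi.zero_apply, hconst, Equiv.sum_comp]

end BinaryCode

lemma setOf_even_hwt (N : ℕ) :
    {v : Fin N → ZMod 2 | Even (hwt v)} = {v | ∑ i, v i = 0} := by
  have hcast (x : ZMod 2) : ((if x ≠ 0 then 1 else 0 : ℕ) : ZMod 2) = x := by revert x; decide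
  ext v
  simp only [Set.mem_ofPred_eq, ← ZMod.natCast_eq_zero_iff_even, hwt, Finset.card_filter,
    Nat.cast_sum, hcast]

open BinaryCode in
theorem alt_invariant_codes (N : ℕ) (hN : 3 ≤ N) :
    (∀ C : Submodule (ZMod 2) (Fin N → ZMod 2),
      (∀ σ ∈ alternatingGroup (Fin N), ∀ v ∈ C, (fun i => v (σ i)) ∈ C) →
      ((C : Set (Fin N → ZMod 2)) = {0} ∨
       (C : Set (Fin N → ZMod 2)) = {0, fun _ => 1} ∨
       (C : Set (Fin N → ZMod 2)) = {v | Even (hwt v)} ∨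
       (C : Set (Fin N → ZMod 2)) = Set.univ)) ∧
    (∀ C : Submodule (ZMod 2) (Fin N → ZMod 2),
      {σ : Equiv.Perm (Fin N) | ∀ v : Fin N → ZMod 2,
          (fun i => v (σ i)) ∈ C ↔ v ∈ C} ≠
        (alternatingGroup (Fin N) : Set (Equiv.Perm (Fin N)))) := by
  have hcard : 3 ≤ Fintype.card (Fin N) := by rwa [Fintype.card_fin]
  refine ⟨fun C hC => setOf_even_hwt N ▸ IsAltInvariant.coe_eq hcard hC, fun C hAut => ?_⟩
  have hC : IsAltInvariant C := fun σ hσ v hv => by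
    rw [← SetLike.mem_coe, ← hAut] at hσ
    exact (hσ v).2 hv
  obtain ⟨a, b, hab⟩ := (Fin.nontrivial_iff_two_le.2 (by omega : 2 ≤ N)).exists_pair_ne
  have hswap : swap a b ∈ alternatingGroup (Fin N) := by
    rw [← SetLike.mem_coe, ← hAut]
    exact hC.comp_mem_iff hcard _
  rw [Perm.mem_alternatingGroup, Perm.sign_swap hab] at hswap
  exact absurd hswap (by decide)
end
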